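/- arXiv:2605.30066 — 2 statements merged into one kernel-verified Lean document; each statement's English description precedes it below -/
import Mathlib

section
/- Let (X,T) be a topological dynamical system and π : X → Z a continuous surjection onto a compact metric space Z with π∘T = π. Then the set Ω = {z ∈ Z : π⁻¹(z) is a minimal set for T} is a Gδ subset of Z. -/
open Filter Topology Set

/-- A map between topological spaces is *semiopen* if the image of every
nonempty open set has nonempty interior. -/
def SemiOpen {X Y : Type*} [TopologicalSpace X] [TopologicalSpace Y] (f : X → Y) : Prop :=
  ∀ U : Set X, IsOpen U → U.Nonempty → (interior (f '' U)).Nonempty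

/-- The `n`-th iterate (`n : ℤ`) of a homeomorphism. -/
def zIter {X : Type*} [TopologicalSpace X] (T : X ≃ₜ X) (n : ℤ) : X → X :=
  fun x => (T.toEquiv ^ n) x

/-- The two-sided orbit of a point under a homeomorphism. -/
def zOrbit {X : Type*} [TopologicalSpace X] (T : X ≃ₜ X) (x : X) : Set X :=
  Set.range fun n : ℤ => zIter T n x

/-- A system is minimal if every orbit is dense. -/
def IsMinimalSystem {X : Type*} [TopologicalSpace X] (T : X ≃ₜ X) : Prop :=
  ∀ x : X, Dense (zOrbit T x)

/-- A minimal subset: nonempty, closed, invariant, with no proper nonempty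
closed invariant subset. -/
def IsMinimalSubset {X : Type*} [TopologicalSpace X] (T : X ≃ₜ X) (M : Set X) : Prop :=
  M.Nonempty ∧ IsClosed M ∧ T '' M = M ∧
    ∀ M' ⊆ M, M'.Nonempty → IsClosed M' → T '' M' = M' → M' = M

/-- A factor map between systems. -/
def IsFactorMap {X Y : Type*} [TopologicalSpace X] [TopologicalSpace Y]
    (T : X ≃ₜ X) (S : Y ≃ₜ Y) (f : X → Y) : Prop :=
  Continuous f ∧ Function.Surjective f ∧ ∀ x, f (T x) = S (f x)

/-- The regionally proximal relation. -/
def RP {X : Type*} [MetricSpace X] (T : X ≃ₜ X) : Set (X × X) :=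
  {p | ∃ (u v : ℕ → X) (n : ℕ → ℤ),
    Tendsto u atTop (𝓝 p.1) ∧ Tendsto v atTop (𝓝 p.2) ∧
    Tendsto (fun i => dist (zIter T (n i) (u i)) (zIter T (n i) (v i))) atTop (𝓝 0)}

/-- A joining of two systems: a closed invariant subset of the product with
full projections onto both coordinates. -/
def IsJoining {X Y : Type*} [TopologicalSpace X] [TopologicalSpace Y]
    (T : X ≃ₜ X) (S : Y ≃ₜ Y) (J : Set (X × Y)) : Prop :=
  IsClosed J ∧ (T.prodCongr S) '' J = J ∧
    Prod.fst '' J = Set.univ ∧ Prod.snd '' J = Set.univ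

/-- `J` projects onto `X_eq × Y_eq`: phrased via the regionally proximal
relation, every product of RP-cells meets `J`. -/
def FullEqProjection {X Y : Type*} [MetricSpace X] [MetricSpace Y]
    (T : X ≃ₜ X) (S : Y ≃ₜ Y) (J : Set (X × Y)) : Prop :=
  ∀ x : X, ∀ y : Y, ∃ p ∈ J, (x, p.1) ∈ RP T ∧ (y, p.2) ∈ RP S

/-- Two minimal systems are quasi-disjoint if the full product is the only
joining projecting onto the product of the maximal equicontinuous factors. -/
def QuasiDisjoint {X Y : Type*} [MetricSpace X] [MetricSpace Y]
    (T : X ≃ₜ X) (S : Y ≃ₜ Y) : Prop :=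
  ∀ J : Set (X × Y), IsJoining T S J → FullEqProjection T S J → J = Set.univ

/-- Two systems are disjoint if the full product is the only joining. -/
def DisjointSystems {X Y : Type*} [TopologicalSpace X] [TopologicalSpace Y]
    (T : X ≃ₜ X) (S : Y ≃ₜ Y) : Prop :=
  ∀ J : Set (X × Y), IsJoining T S J → J = Set.univ

/-- A system is equicontinuous (with respect to all integer iterates). -/
def EquicontinuousSystem {X : Type*} [MetricSpace X] (T : X ≃ₜ X) : Prop :=
  ∀ ε > (0 : ℝ), ∃ δ > (0 : ℝ), ∀ x₁ x₂ : X, dist x₁ x₂ < δ →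
    ∀ n : ℤ, dist (zIter T n x₁) (zIter T n x₂) < ε

/-- A pair of points is proximal. -/
def ProximalPair {X : Type*} [MetricSpace X] (T : X ≃ₜ X) (x₁ x₂ : X) : Prop :=
  ∀ ε > (0 : ℝ), ∃ n : ℤ, dist (zIter T n x₁) (zIter T n x₂) < ε

/-! Each fibre `π⁻¹{z}` is compact and `T`-invariant, so it is a minimal set iff it is nonempty
and every orbit in it is dense in it, that is, iff for every `ε > 0` some finite set of iterates
carries every point of the fibre `ε`-close to every other point. For fixed `ε` and a fixed finite
set of iterates this is an open condition on `z`: `π` is a closed map with compact fibres, so by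
the tube lemma a neighbourhood of one fibre squared contains the squares of all nearby fibres.
Intersecting over `ε = 1/(m+1)` and with the closed set `range π` gives a Gδ set. -/

def Homeomorph.toPermHom (X : Type*) [TopologicalSpace X] : (X ≃ₜ X) →* Equiv.Perm X where
  toFun := Homeomorph.toEquiv
  map_one' := rfl
  map_mul' _ _ := rfl

section Minimal

variable {X : Type*} [TopologicalSpace X] (T : X ≃ₜ X)

lemma zIter_eq_zpow (n : ℤ) : zIter T n = ⇑(T ^ n) :=
  (congrArg DFunLike.coe (map_zpow (Homeomorph.toPermHom X) T n)).symm

lemma continuous_zIter (n : ℤ) : Continuous (zIter T n) := by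
  rw [zIter_eq_zpow]
  exact (T ^ n).continuous

open Pointwise in
lemma zIter_image_eq_of_image_eq {M : Set X} (hM : T '' M = M) (n : ℤ) : zIter T n '' M = M :=
  MulAction.mem_stabilizer_iff.1 <|
    (MulAction.stabilizer (Equiv.Perm X) M).zpow_mem (MulAction.mem_stabilizer_iff.2 hM) n

lemma image_zOrbit (x : X) : T '' zOrbit T x = zOrbit T x := by
  rw [zOrbit, ← range_comp]
  have hshift : T ∘ (fun n : ℤ => zIter T n x) = (fun n => zIter T n x) ∘ (1 + ·) := by
    funext n
    simp [zIter, zpow_add]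
  rw [hshift]
  exact (add_left_surjective 1).range_comp _

lemma zOrbit_subset_of_image_eq {M : Set X} (hM : T '' M = M) {x : X} (hx : x ∈ M) :
    zOrbit T x ⊆ M := by
  rintro _ ⟨n, rfl⟩
  rw [← zIter_image_eq_of_image_eq T hM n]
  exact mem_image_of_mem _ hx

lemma image_preimage_eq_of_apply_eq {Z : Type*} {π : X → Z} (hπ : ∀ x, π (T x) = π x)
    (s : Set Z) : T '' (π ⁻¹' s) = π ⁻¹' s := by
  ext x
  constructor
  · rintro ⟨y, hy, rfl⟩
    rwa [mem_preimage, hπ]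
  · intro hx
    refine ⟨T.symm x, ?_, T.apply_symm_apply x⟩
    rwa [mem_preimage, ← hπ, T.apply_symm_apply]

variable {T}

lemma IsMinimalSubset.subset_closure_zOrbit {M : Set X} (hM : IsMinimalSubset T M) {x : X}
    (hx : x ∈ M) : M ⊆ closure (zOrbit T x) := by
  obtain ⟨-, hclosed, hinv, hmin⟩ := hM
  refine (hmin _ (closure_minimal (zOrbit_subset_of_image_eq T hinv hx) hclosed)
    ⟨x, subset_closure ⟨0, rfl⟩⟩ isClosed_closure ?_).ge
  rw [T.image_closure, image_zOrbit]

lemma isMinimalSubset_iff {M : Set X} (hclosed : IsClosed M) (hinv : T '' M = M) :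
    IsMinimalSubset T M ↔ M.Nonempty ∧ ∀ x ∈ M, M ⊆ closure (zOrbit T x) := by
  refine ⟨fun hM => ⟨hM.1, fun x hx => hM.subset_closure_zOrbit hx⟩, ?_⟩
  rintro ⟨hne, hdense⟩
  refine ⟨hne, hclosed, hinv, fun M' hM' ⟨x, hx⟩ hclosed' hinv' => hM'.antisymm ?_⟩
  calc M ⊆ closure (zOrbit T x) := hdense x (hM' hx)
    _ ⊆ M' := closure_minimal (zOrbit_subset_of_image_eq T hinv' hx) hclosed'

end Minimal

section Metric

variable {X : Type*} [MetricSpace X] (T : X ≃ₜ X)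

def zIterNear (F : Finset ℤ) (ε : ℝ) : Set (X × X) :=
  ⋃ n ∈ F, {p | dist (zIter T n p.1) p.2 < ε}

lemma isOpen_zIterNear (F : Finset ℤ) (ε : ℝ) : IsOpen (zIterNear T F ε) :=
  isOpen_biUnion fun n _ =>
    isOpen_lt (((continuous_zIter T n).comp continuous_fst).dist continuous_snd) continuous_const

lemma zIterNear_mono (F : Finset ℤ) : Monotone (zIterNear T F) := fun _ _ hεδ =>
  biUnion_mono subset_rfl fun _ _ _ hp => lt_of_lt_of_le hp hεδ

lemma forall_subset_closure_zOrbit_iff {M : Set X} (hM : IsCompact M) :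
    (∀ x ∈ M, M ⊆ closure (zOrbit T x)) ↔
      ∀ ε > 0, ∃ F : Finset ℤ, M ×ˢ M ⊆ zIterNear T F ε := by
  constructor
  · intro hdense ε hε
    refine (hM.prod hM).elim_finite_subcover _ (fun n => isOpen_zIterNear T {n} ε) ?_
      |>.imp fun F hF => hF.trans (by simp [zIterNear])
    rintro ⟨x, y⟩ ⟨hx, hy⟩
    obtain ⟨_, ⟨n, rfl⟩, hn⟩ := Metric.mem_closure_iff.1 (hdense x hx hy) ε hε
    exact mem_iUnion.2 ⟨n, by simpa [zIterNear, dist_comm] using hn⟩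
  · intro hnear x hx y hy
    refine Metric.mem_closure_iff.2 fun ε hε => ?_
    obtain ⟨F, hF⟩ := hnear ε hε
    obtain ⟨n, -, hn⟩ := mem_iUnion₂.1 (hF (mk_mem_prod hx hy))
    exact ⟨zIter T n x, ⟨n, rfl⟩, by rwa [dist_comm]⟩

end Metric

lemma isOpen_setOf_preimage_prod_subset {X Z : Type*} [TopologicalSpace X] [TopologicalSpace Z]
    {π : X → Z} (hπ : IsProperMap π) {U : Set (X × X)} (hU : IsOpen U) :
    IsOpen {z | (π ⁻¹' {z}) ×ˢ (π ⁻¹' {z}) ⊆ U} := by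
  refine isOpen_iff_forall_mem_open.2 fun z hz => ?_
  have hfiber := hπ.isCompact_preimage (isCompact_singleton (x := z))
  obtain ⟨u, v, hu, hv, hzu, hzv, huv⟩ := generalized_tube_lemma hfiber hfiber hU hz
  refine ⟨kernImage π (u ∩ v), fun z' hz' => ?_,
    isClosedMap_iff_kernImage.1 hπ.isClosedMap (hu.inter hv), fun x hx => ⟨hzu hx, hzv hx⟩⟩
  have hz'uv : π ⁻¹' {z'} ⊆ u ∩ v := fun x hx => hz' hx
  exact (prod_mono (hz'uv.trans inter_subset_left) (hz'uv.trans inter_subset_right)).trans huv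

lemma isGδ_setOf_forall_pos {Z : Type*} [TopologicalSpace Z] {s : ℝ → Set Z}
    (hopen : ∀ ε > 0, IsOpen (s ε)) (hmono : Monotone s) : IsGδ {z | ∀ ε > 0, z ∈ s ε} := by
  have hinter : {z | ∀ ε > 0, z ∈ s ε} = ⋂ m : ℕ, s (1 / (m + 1)) := by
    ext z
    simp only [mem_ofPred_eq, mem_iInter]
    refine ⟨fun h m => h _ Nat.one_div_pos_of_nat, fun h ε hε => ?_⟩
    obtain ⟨m, hm⟩ := exists_nat_one_div_lt hε
    exact hmono hm.le (h m)
  rw [hinter]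
  exact .iInter fun m => (hopen _ Nat.one_div_pos_of_nat).isGδ

theorem stmt4_general {X Z : Type*} [MetricSpace X] [CompactSpace X]
    [MetricSpace Z] (T : X ≃ₜ X) (π : X → Z)
    (hcont : Continuous π)
    (hfix : ∀ x, π (T x) = π x) :
    IsGδ {z : Z | IsMinimalSubset T (π ⁻¹' {z})} := by
  set s : ℝ → Set Z := fun ε => {z | ∃ F, (π ⁻¹' {z}) ×ˢ (π ⁻¹' {z}) ⊆ zIterNear T F ε}
  have hfiber : ∀ z, IsMinimalSubset T (π ⁻¹' {z}) ↔ z ∈ range π ∧ ∀ ε > 0, z ∈ s ε := by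
    intro z
    have hclosed : IsClosed (π ⁻¹' {z}) := isClosed_singleton.preimage hcont
    rw [isMinimalSubset_iff hclosed (image_preimage_eq_of_apply_eq T hfix _),
      forall_subset_closure_zOrbit_iff T hclosed.isCompact, preimage_singleton_nonempty]
    rfl
  simp_rw [hfiber, ofPred_and]
  refine (isCompact_range hcont).isClosed.isGδ.inter (isGδ_setOf_forall_pos (fun ε _ => ?_) ?_)
  · simp_rw [s, ofPred_exists]
    exact isOpen_iUnion fun F =>
      isOpen_setOf_preimage_prod_subset hcont.isProperMap (isOpen_zIterNear T F ε)
  · exact fun ε δ hεδ z ⟨F, hF⟩ => ⟨F, hF.trans (zIterNear_mono T F hεδ)⟩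

/-- if π : X → Z is a continuous surjection with π ∘ T = π, then
the set of z whose fiber is a minimal set is Gδ. -/
theorem stmt4 {X Z : Type*} [MetricSpace X] [CompactSpace X]
    [MetricSpace Z] [CompactSpace Z] (T : X ≃ₜ X) (π : X → Z)
    (hcont : Continuous π) (hsurj : Function.Surjective π)
    (hfix : ∀ x, π (T x) = π x) :
    IsGδ {z : Z | IsMinimalSubset T (π ⁻¹' {z})} :=
  stmt4_general T π hcont hfix
end

section
/- Let (X,T) and (Y,S) be minimal systems and let φ : (X',T) → (X,T) be a proximal extension with (X',T) minimal. If X is quasi-disjoint from Y, then X' is quasi-disjoint from Y. -/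
open Filter Topology Set

/-! Push a joining `J ⊆ X' × Y` forward along `φ × id`: the image is a joining of `X` and `Y`
which still projects onto the product of the equicontinuous factors, so by quasi-disjointness it
is all of `X × Y`, i.e. `J` meets every fibre of `φ × id`. A minimal point `(a, b)` of `X' × Y` is
therefore proximal to some `(a', b) ∈ J` with `φ a' = φ a`, and a minimal point proximal to `p`
lies in the orbit closure of `p`, hence in `J`. As minimal points are dense in `X' × Y`, `J` is
everything. -/

namespace Homeomorph

variable {X Y : Type*} [TopologicalSpace X] [TopologicalSpace Y]

lemma apply_zpow_of_semiconj {T : X ≃ₜ X} {S : Y ≃ₜ Y} {f : X → Y}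
    (hf : ∀ x, f (T x) = S (f x)) (n : ℤ) (x : X) : f ((T ^ n) x) = (S ^ n) (f x) := by
  have hf_symm : ∀ x, f (T.symm x) = S.symm (f x) := fun x => by
    rw [← S.symm_apply_apply (f (T.symm x)), ← hf, T.apply_symm_apply]
  induction n using Int.induction_on generalizing x with
  | zero => rfl
  | succ k ih => simp only [zpow_add_one, mul_apply, hf, ih]
  | pred k ih => simp only [zpow_sub_one, mul_apply, inv_apply, hf_symm, ih]

lemma image_zpow_of_image_eq {T : X ≃ₜ X} {M : Set X} (hM : T '' M = M) (n : ℤ) :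
    ⇑(T ^ n) '' M = M := by
  have hM_symm : T.symm '' M = M := by rw [T.image_symm, ← hM, T.preimage_image, hM]
  induction n using Int.induction_on with
  | zero => exact image_id M
  | succ k ih =>
      rw [zpow_add_one]
      change ⇑(T ^ (k : ℤ)) ∘ ⇑T '' M = M
      rw [image_comp, hM, ih]
  | pred k ih =>
      rw [zpow_sub_one]
      change ⇑(T ^ (-k : ℤ)) ∘ ⇑T.symm '' M = M
      rw [image_comp, hM_symm, ih]

lemma prodCongr_zpow (T : X ≃ₜ X) (S : Y ≃ₜ Y) (n : ℤ) :
    T.prodCongr S ^ n = (T ^ n).prodCongr (S ^ n) :=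
  map_zpow (MonoidHom.mk' (fun g : (X ≃ₜ X) × (Y ≃ₜ Y) => g.1.prodCongr g.2) fun _ _ => rfl)
    (T, S) n |>.symm

end Homeomorph

section Orbit

variable {X : Type*} [TopologicalSpace X] {T : X ≃ₜ X}

variable (T) in
lemma zIter_apply (n : ℤ) (x : X) : zIter T n x = (T ^ n) x :=
  congrArg (· x) (map_zpow (MonoidHom.mk' (Homeomorph.toEquiv (X := X)) fun _ _ => rfl) T n).symm

lemma zIter_mem_of_image_eq {M : Set X} (hM : T '' M = M) {x : X} (hx : x ∈ M) (n : ℤ) :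
    zIter T n x ∈ M := by
  rw [zIter_apply, ← Homeomorph.image_zpow_of_image_eq hM n]
  exact mem_image_of_mem _ hx

lemma closure_zOrbit_subset {M : Set X} (hMc : IsClosed M) (hM : T '' M = M) {x : X}
    (hx : x ∈ M) : closure (zOrbit T x) ⊆ M :=
  hMc.closure_subset_iff.mpr <| range_subset_iff.mpr (zIter_mem_of_image_eq hM hx)

variable (T) in
lemma image_closure_zOrbit (x : X) :
    T '' closure (zOrbit T x) = closure (zOrbit T x) := by
  have h_shift : (⇑T ∘ fun n : ℤ => zIter T n x) = (fun n => zIter T n x) ∘ (1 + ·) := by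
    funext n
    simp only [Function.comp_apply, zIter_apply, zpow_one_add, Homeomorph.mul_apply]
  rw [Homeomorph.image_closure, zOrbit, ← range_comp, h_shift]
  exact congrArg closure ((Equiv.addLeft (1 : ℤ)).surjective.range_comp _)

end Orbit

section MinimalSubset

variable {Z : Type*} [TopologicalSpace Z] {R : Z ≃ₜ Z}

lemma exists_isMinimalSubset [CompactSpace Z] [Nonempty Z] (R : Z ≃ₜ Z) :
    ∃ M, IsMinimalSubset R M := by
  set 𝒮 : Set (Set Z) := {M | M.Nonempty ∧ IsClosed M ∧ R '' M = M}
  have h_chain : ∀ c ⊆ 𝒮, IsChain (· ⊆ ·) c → c.Nonempty → ∃ lb ∈ 𝒮, ∀ s ∈ c, lb ⊆ s := by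
    intro c hc hchain hne
    have : Nonempty c := hne.to_subtype
    refine ⟨⋂₀ c, ⟨?_, isClosed_sInter fun s hs => (hc hs).2.1, ?_⟩,
      fun s hs => sInter_subset_of_mem hs⟩
    · rw [sInter_eq_iInter]
      exact IsCompact.nonempty_iInter_of_directed_nonempty_isCompact_isClosed _
        (fun s t => (hchain.total s.2 t.2).elim (fun h => ⟨s, subset_rfl, h⟩)
          (fun h => ⟨t, h, subset_rfl⟩)) (fun s => (hc s.2).1)
        (fun s => (hc s.2).2.1.isCompact) (fun s => (hc s.2).2.1)
    · rw [sInter_eq_iInter, image_iInter R.bijective]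
      exact iInter_congr fun s => (hc s.2).2.2
  obtain ⟨M, -, hmin⟩ := zorn_superset_nonempty 𝒮 h_chain univ
    ⟨univ_nonempty, isClosed_univ, image_univ_of_surjective R.surjective⟩
  exact ⟨M, hmin.prop.1, hmin.prop.2.1, hmin.prop.2.2,
    fun M' hM' hne hcl hinv => hmin.eq_of_le ⟨hne, hcl, hinv⟩ hM'⟩

lemma IsMinimalSubset.closure_zOrbit_eq {M : Set Z} (hM : IsMinimalSubset R M) {z : Z}
    (hz : z ∈ M) : closure (zOrbit R z) = M :=
  hM.2.2.2 _ (closure_zOrbit_subset hM.2.1 hM.2.2.1 hz) ⟨z, subset_closure ⟨0, rfl⟩⟩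
    isClosed_closure (image_closure_zOrbit R z)

lemma image_image_comm_of_commute {g : Z ≃ₜ Z} (hg : Commute g R) (s : Set Z) :
    R '' (g '' s) = g '' (R '' s) :=
  image_comm fun z => congrArg (· z) hg.eq.symm

lemma IsMinimalSubset.image_of_commute {M : Set Z} (hM : IsMinimalSubset R M) {g : Z ≃ₜ Z}
    (hg : Commute g R) : IsMinimalSubset R (g '' M) := by
  refine ⟨hM.1.image g, g.isClosed_image.mpr hM.2.1,
    by rw [image_image_comm_of_commute hg, hM.2.2.1], fun M' hM' hne hcl hinv => ?_⟩
  have h_back : g.symm '' M' = M := hM.2.2.2 _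
    (by rw [g.image_symm]; exact (preimage_mono hM').trans (g.preimage_image M).subset)
    (hne.image _) (g.symm.isClosed_image.mpr hcl)
    (by rw [image_image_comm_of_commute (g := g.symm) hg.inv_left, hinv])
  rw [← h_back, g.image_symm, g.image_preimage]

end MinimalSubset

lemma dense_setOf_mem_isMinimalSubset {X Y : Type*} [TopologicalSpace X] [CompactSpace X]
    [TopologicalSpace Y] [CompactSpace Y] {T : X ≃ₜ X} {S : Y ≃ₜ Y}
    (hX : IsMinimalSystem T) (hY : IsMinimalSystem S) :
    Dense {p : X × Y | ∃ M, IsMinimalSubset (T.prodCongr S) M ∧ p ∈ M} := by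
  rcases isEmpty_or_nonempty (X × Y) with _ | _
  · exact fun p => isEmptyElim p
  obtain ⟨M, hM⟩ := exists_isMinimalSubset (T.prodCongr S)
  obtain ⟨⟨a, b⟩, hab⟩ := hM.1
  refine ((hX a).prod (hY b)).mono ?_
  rintro ⟨x, y⟩ ⟨⟨i, rfl⟩, ⟨j, rfl⟩⟩
  have h_comm : Commute ((T ^ i).prodCongr (S ^ j)) (T.prodCongr S) := by
    ext p
    · exact congrArg (· p.1) ((Commute.self_zpow T i).eq.symm)
    · exact congrArg (· p.2) ((Commute.self_zpow S j).eq.symm)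
  exact ⟨_, hM.image_of_commute h_comm, (a, b), hab, by simp only [zIter_apply]; rfl⟩

lemma ProximalPair.prodCongr_left {X Y : Type*} [MetricSpace X] [MetricSpace Y]
    {T : X ≃ₜ X} {x₁ x₂ : X} (h : ProximalPair T x₁ x₂) (S : Y ≃ₜ Y) (y : Y) :
    ProximalPair (T.prodCongr S) (x₁, y) (x₂, y) := by
  intro ε hε
  obtain ⟨n, hn⟩ := h ε hε
  refine ⟨n, ?_⟩
  simpa only [zIter_apply, Homeomorph.prodCongr_zpow, Homeomorph.coe_prodCongr, Prod.map_apply,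
    Prod.dist_eq, dist_self, dist_nonneg, sup_of_le_left] using hn

lemma ProximalPair.mem_closure_zOrbit {Z : Type*} [MetricSpace Z] [CompactSpace Z]
    {R : Z ≃ₜ Z} {p q : Z} (hpq : ProximalPair R p q) {M : Set Z}
    (hM : IsMinimalSubset R M) (hq : q ∈ M) : q ∈ closure (zOrbit R p) := by
  obtain ⟨n, hn⟩ : ∃ n : ℕ → ℤ,
      Tendsto (fun i => dist (zIter R (n i) q) (zIter R (n i) p)) atTop (𝓝 0) := by
    choose n hn using fun i : ℕ => hpq (1 / (i + 1)) Nat.one_div_pos_of_nat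
    refine ⟨n, squeeze_zero (fun _ => dist_nonneg) (fun i => ?_)
      tendsto_one_div_add_atTop_nhds_zero_nat⟩
    rw [dist_comm]
    exact (hn i).le
  obtain ⟨z, -, ψ, hψ, hz⟩ :=
    isCompact_univ.tendsto_subseq fun i => mem_univ (zIter R (n i) q)
  have hz_p : Tendsto (fun i => zIter R (n (ψ i)) p) atTop (𝓝 z) :=
    hz.congr_dist (hn.comp hψ.tendsto_atTop)
  have hz_M : z ∈ M := hM.2.1.mem_of_tendsto hz
    (Eventually.of_forall fun _ => zIter_mem_of_image_eq hM.2.2.1 hq _)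
  have hz_closure : z ∈ closure (zOrbit R p) :=
    mem_closure_of_tendsto hz_p (Eventually.of_forall fun _ => mem_range_self _)
  rw [← hM.closure_zOrbit_eq hz_M] at hq
  exact closure_zOrbit_subset isClosed_closure (image_closure_zOrbit R p) hz_closure hq

lemma map_mem_RP {X Y : Type*} [MetricSpace X] [MetricSpace Y] {T : X ≃ₜ X} {S : Y ≃ₜ Y}
    {f : X → Y} (hf : UniformContinuous f) (hfT : ∀ x, f (T x) = S (f x)) {a b : X}
    (hab : (a, b) ∈ RP T) : (f a, f b) ∈ RP S := by
  obtain ⟨u, v, n, hu, hv, hd⟩ := hab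
  refine ⟨f ∘ u, f ∘ v, n, (hf.continuous.tendsto a).comp hu,
    (hf.continuous.tendsto b).comp hv, ?_⟩
  have h_unif := Tendsto.comp hf <| tendsto_uniformity_iff_dist_tendsto_zero
    (f := fun i => (zIter T (n i) (u i), zIter T (n i) (v i))) |>.mpr hd
  simpa only [Function.comp_apply, zIter_apply, Homeomorph.apply_zpow_of_semiconj hfT] using
    tendsto_uniformity_iff_dist_tendsto_zero.mp h_unif

section FactorJoining

variable {X X' Y : Type*} [MetricSpace X] [MetricSpace X'] [CompactSpace X'] [MetricSpace Y]
  {T : X ≃ₜ X} {T' : X' ≃ₜ X'} {S : Y ≃ₜ Y} {φ : X' → X} {J : Set (X' × Y)}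

lemma IsJoining.image_prodMap [CompactSpace Y] (hJ : IsJoining T' S J)
    (hφ : IsFactorMap T' T φ) : IsJoining T S (Prod.map φ id '' J) := by
  obtain ⟨hJc, hJ_inv, hJ_fst, hJ_snd⟩ := hJ
  obtain ⟨hφc, hφs, hφT⟩ := hφ
  refine ⟨(hJc.isCompact.image (hφc.prodMap continuous_id)).isClosed, ?_, ?_, ?_⟩
  · rw [image_comm (f := T.prodCongr S) (g := Prod.map φ id) (g' := Prod.map φ id)
      (f' := T'.prodCongr S)
      fun p => Prod.ext (hφT p.1).symm rfl, hJ_inv]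
  · rw [image_comm (f := Prod.fst) (g := Prod.map φ id) (g' := φ) (f' := Prod.fst) fun _ => rfl,
      hJ_fst, image_univ_of_surjective hφs]
  · rwa [image_image]

lemma FullEqProjection.image_prodMap (hJ : FullEqProjection T' S J)
    (hφ : IsFactorMap T' T φ) : FullEqProjection T S (Prod.map φ id '' J) := by
  intro x y
  obtain ⟨x', rfl⟩ := hφ.2.1 x
  obtain ⟨p, hp, hx', hy⟩ := hJ x' y
  exact ⟨(φ p.1, p.2), mem_image_of_mem _ hp,
    map_mem_RP (CompactSpace.uniformContinuous_of_continuous hφ.1) hφ.2.2 hx', hy⟩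

end FactorJoining

theorem stmt10_general {X X' Y : Type*} [MetricSpace X]
    [MetricSpace X'] [CompactSpace X'] [MetricSpace Y] [CompactSpace Y]
    (T : X ≃ₜ X) (T' : X' ≃ₜ X') (S : Y ≃ₜ Y)
    (hX' : IsMinimalSystem T') (hY : IsMinimalSystem S)
    (φ : X' → X) (hφ : IsFactorMap T' T φ)
    (hprox : ∀ x₁ x₂ : X', φ x₁ = φ x₂ → ProximalPair T' x₁ x₂)
    (hQD : QuasiDisjoint T S) :
    QuasiDisjoint T' S := by
  intro J hJ hJ_eq
  have h_image : Prod.map φ id '' J = univ :=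
    hQD _ (hJ.image_prodMap hφ) (hJ_eq.image_prodMap hφ)
  have h_min : ∀ M, IsMinimalSubset (T'.prodCongr S) M → M ⊆ J := by
    rintro M hM ⟨a, b⟩ hab
    obtain ⟨⟨a', b'⟩, ha'_J, h_eq⟩ : (φ a, b) ∈ Prod.map φ id '' J := h_image ▸ mem_univ _
    simp only [Prod.map, id, Prod.mk.injEq] at h_eq
    obtain ⟨hφa', rfl⟩ := h_eq
    exact closure_zOrbit_subset hJ.1 hJ.2.1 ha'_J
      (((hprox a' a hφa').prodCongr_left S _).mem_closure_zOrbit hM hab)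
  rw [← hJ.1.closure_eq, ← univ_subset_iff, ← (dense_setOf_mem_isMinimalSubset hX' hY).closure_eq]
  exact closure_mono fun p ⟨M, hM, hp⟩ => h_min M hM hp

/-- quasi-disjointness lifts through proximal extensions. -/
theorem stmt10 {X X' Y : Type*} [MetricSpace X] [CompactSpace X]
    [MetricSpace X'] [CompactSpace X'] [MetricSpace Y] [CompactSpace Y]
    (T : X ≃ₜ X) (T' : X' ≃ₜ X') (S : Y ≃ₜ Y)
    (hX : IsMinimalSystem T) (hX' : IsMinimalSystem T') (hY : IsMinimalSystem S)
    (φ : X' → X) (hφ : IsFactorMap T' T φ)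
    (hprox : ∀ x₁ x₂ : X', φ x₁ = φ x₂ → ProximalPair T' x₁ x₂)
    (hQD : QuasiDisjoint T S) :
    QuasiDisjoint T' S :=
  stmt10_general T T' S hX' hY φ hφ hprox hQD
end
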